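/- arXiv:1409.8272 — 4 statements merged into one kernel-verified Lean document; each statement's English description precedes it below -/
import Mathlib

section
/- Let X be a compact Hausdorff space, V a finite-dimensional real vector space, μ a finite Borel measure on X with full support, φ: X → V continuous, and g: V → ℝ linear with g(φ(x)) = 1 for all x ∈ X. Let C = Cone(φ(X)) and let (F_j) be an increasing sequence of vector subspaces of C(X,ℝ) whose union is a subalgebra that separates points and contains the constants. For λ ∈ V*, say λ ∈ C*(F_j) if ∫_X λ(φ(u)) p(u)² dμ(u) ≥ 0 for all p ∈ F_j. Then the intersection over all j of C*(F_j) equals the dual cone C* = {λ ∈ V* : λ(c) ≥ 0 for all c ∈ C}. -/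
/-!
A functional `l` is nonnegative on the cone iff `f = l ∘ φ ≥ 0`, which clearly makes every
`∫ f p² dμ` nonnegative. Conversely, `p ↦ ∫ f p² dμ` is continuous for the uniform norm and
the union of the `F j` is dense by Stone–Weierstrass, so `∫ f p² dμ ≥ 0` for every continuous `p`.
Taking for `p` the negative part of `f` makes `f p² = -p³` nonpositive, so it vanishes by full
support, which forces the negative part of `f` to vanish.
-/

open MeasureTheory

/-- The conical hull of a set: all finite nonnegative combinations of its elements. -/
def coneHull {V : Type*} [AddCommMonoid V] [Module ℝ V] (S : Set V) : Set V :=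
  {v | ∃ (m : ℕ) (c : Fin m → ℝ) (x : Fin m → V),
    (∀ i, 0 ≤ c i) ∧ (∀ i, x i ∈ S) ∧ v = ∑ i, c i • x i}

theorem subset_coneHull {V : Type*} [AddCommMonoid V] [Module ℝ V] (S : Set V) :
    S ⊆ coneHull S :=
  fun s hs => ⟨1, fun _ => 1, fun _ => s, fun _ => zero_le_one, fun _ => hs, by simp⟩

theorem forall_coneHull_nonneg_iff {V : Type*} [AddCommMonoid V] [Module ℝ V]
    (l : V →ₗ[ℝ] ℝ) (S : Set V) : (∀ c ∈ coneHull S, 0 ≤ l c) ↔ ∀ s ∈ S, 0 ≤ l s := by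
  refine ⟨fun h s hs => h s (subset_coneHull S hs), ?_⟩
  rintro h _ ⟨m, c, x, hc, hx, rfl⟩
  rw [map_sum]
  refine Finset.sum_nonneg fun i _ => ?_
  rw [map_smul, smul_eq_mul]
  exact mul_nonneg (hc i) (h _ (hx i))

namespace ContinuousMap

variable {X : Type*} [TopologicalSpace X] [CompactSpace X]

theorem dense_iUnion_of_separatesPoints {ι : Type*} [Nonempty ι]
    (F : ι → Submodule ℝ C(X, ℝ)) (hF : Directed (· ≤ ·) F)
    (hmul : ∀ f₁ f₂ : C(X, ℝ), f₁ ∈ ⋃ j, (F j : Set C(X, ℝ)) →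
      f₂ ∈ ⋃ j, (F j : Set C(X, ℝ)) → f₁ * f₂ ∈ ⋃ j, (F j : Set C(X, ℝ)))
    (hone : (1 : C(X, ℝ)) ∈ ⋃ j, (F j : Set C(X, ℝ)))
    (hsep : ∀ x y : X, x ≠ y → ∃ f ∈ ⋃ j, (F j : Set C(X, ℝ)), f x ≠ f y) :
    Dense (⋃ j, (F j : Set C(X, ℝ))) := by
  rw [← Submodule.coe_iSup_of_directed F hF] at hmul hone hsep ⊢
  let A : Subalgebra ℝ C(X, ℝ) := (⨆ j, F j).toSubalgebra hone hmul
  have hA : A.SeparatesPoints := fun x y hxy =>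
    let ⟨f, hf, hfxy⟩ := hsep x y hxy
    ⟨f, ⟨f, hf, rfl⟩, hfxy⟩
  have hA_top := subalgebra_topologicalClosure_eq_top_of_separatesPoints A hA
  rw [dense_iff_closure_eq]
  change closure (A : Set C(X, ℝ)) = _
  rw [← Subalgebra.topologicalClosure_coe, hA_top]
  rfl

variable [MeasurableSpace X] [BorelSpace X] (μ : Measure X) [IsFiniteMeasure μ]

theorem continuous_integral : Continuous fun f : C(X, ℝ) => ∫ x, f x ∂μ := by
  have := MeasureTheory.continuous_integral.comp (toLp (E := ℝ) 1 μ ℝ).continuous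
  convert this using 2 with f
  exact integral_congr_ae (coeFn_toLp μ f).symm

theorem continuous_integral_mul_sq (f : C(X, ℝ)) :
    Continuous fun p : C(X, ℝ) => ∫ x, f x * p x ^ 2 ∂μ :=
  (continuous_integral μ).comp (continuous_const.mul (continuous_pow 2) : Continuous (f * · ^ 2))

variable [μ.IsOpenPosMeasure]

theorem nonneg_of_forall_integral_mul_sq_nonneg (f : C(X, ℝ))
    (h : ∀ p : C(X, ℝ), 0 ≤ ∫ x, f x * p x ^ 2 ∂μ) (x : X) : 0 ≤ f x := by
  by_contra! hx
  set p : C(X, ℝ) := -f ⊔ 0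
  have hpos := (-(f * p ^ 2)).continuous.integral_pos_of_hasCompactSupport_nonneg_nonzero
    (μ := μ) (HasCompactSupport.of_compactSpace _) ?_ (x := x) ?_
  · simp only [coe_neg, coe_mul, coe_pow, Pi.neg_apply, Pi.mul_apply, Pi.pow_apply,
      integral_neg] at hpos
    linarith [h p]
  · intro u
    simp only [Pi.zero_apply, neg_apply, mul_apply, pow_apply, Left.nonneg_neg_iff]
    rcases le_total (f u) 0 with hu | hu
    · exact mul_nonpos_of_nonpos_of_nonneg hu (sq_nonneg _)
    · simp [p, hu]
  · have hpx : p x = -f x := max_eq_left (neg_nonneg.mpr hx.le)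
    simp only [neg_apply, mul_apply, pow_apply, hpx]
    exact neg_ne_zero.mpr (mul_ne_zero hx.ne (pow_ne_zero 2 (neg_ne_zero.mpr hx.ne)))

theorem nonneg_of_dense_of_integral_mul_sq_nonneg {S : Set C(X, ℝ)} (hS : Dense S)
    (f : C(X, ℝ)) (h : ∀ p ∈ S, 0 ≤ ∫ x, f x * p x ^ 2 ∂μ) (x : X) : 0 ≤ f x :=
  nonneg_of_forall_integral_mul_sq_nonneg μ f
    (hS.induction h (isClosed_le continuous_const (continuous_integral_mul_sq μ f))) x

end ContinuousMap

theorem stmt_0_general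
    {X : Type*} [TopologicalSpace X] [CompactSpace X]
    [MeasurableSpace X] [BorelSpace X]
    {V : Type*} [NormedAddCommGroup V] [NormedSpace ℝ V] [FiniteDimensional ℝ V]
    (μ : Measure X) [IsFiniteMeasure μ]
    (hfull : ∀ U : Set X, IsOpen U → U.Nonempty → 0 < μ U)
    (φ : C(X, V))
    (F : ℕ → Subspace ℝ C(X, ℝ)) (hmono : Monotone F)
    (hmul : ∀ f₁ f₂ : C(X, ℝ), f₁ ∈ (⋃ j, (F j : Set C(X, ℝ))) →
      f₂ ∈ (⋃ j, (F j : Set C(X, ℝ))) → f₁ * f₂ ∈ ⋃ j, (F j : Set C(X, ℝ)))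
    (hsep : ∀ x y : X, x ≠ y → ∃ f ∈ ⋃ j, (F j : Set C(X, ℝ)), f x ≠ f y)
    (hconst : (1 : C(X, ℝ)) ∈ ⋃ j, (F j : Set C(X, ℝ))) :
    {l : V →ₗ[ℝ] ℝ | ∀ j : ℕ, ∀ p ∈ F j, 0 ≤ ∫ u, l (φ u) * (p u) ^ 2 ∂μ} =
    {l : V →ₗ[ℝ] ℝ | ∀ c ∈ coneHull (Set.range fun x : X => φ x), 0 ≤ l c} := by
  have : μ.IsOpenPosMeasure := ⟨fun U hU hne => (hfull U hU hne).ne'⟩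
  have hdense :=
    ContinuousMap.dense_iUnion_of_separatesPoints F hmono.directed_le hmul hconst hsep
  ext l
  simp only [Set.mem_ofPred_eq, forall_coneHull_nonneg_iff, Set.forall_mem_range]
  constructor
  · intro hl x
    let f : C(X, ℝ) := (⟨l, l.continuous_of_finiteDimensional⟩ : C(V, ℝ)).comp φ
    refine ContinuousMap.nonneg_of_dense_of_integral_mul_sq_nonneg μ hdense f (fun p hp => ?_) x
    obtain ⟨j, hpj⟩ := Set.mem_iUnion.mp hp
    exact hl j p hpj
  · intro hl j p _
    exact integral_nonneg fun u => mul_nonneg (hl u) (sq_nonneg _)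

theorem stmt_0
    {X : Type*} [TopologicalSpace X] [CompactSpace X] [T2Space X]
    [MeasurableSpace X] [BorelSpace X]
    {V : Type*} [NormedAddCommGroup V] [NormedSpace ℝ V] [FiniteDimensional ℝ V]
    (μ : Measure X) [IsFiniteMeasure μ]
    (hfull : ∀ U : Set X, IsOpen U → U.Nonempty → 0 < μ U)
    (φ : C(X, V)) (g : V →ₗ[ℝ] ℝ) (hg : ∀ x : X, g (φ x) = 1)
    (F : ℕ → Subspace ℝ C(X, ℝ)) (hmono : Monotone F)
    (hmul : ∀ f₁ f₂ : C(X, ℝ), f₁ ∈ (⋃ j, (F j : Set C(X, ℝ))) →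
      f₂ ∈ (⋃ j, (F j : Set C(X, ℝ))) → f₁ * f₂ ∈ ⋃ j, (F j : Set C(X, ℝ)))
    (hsep : ∀ x y : X, x ≠ y → ∃ f ∈ ⋃ j, (F j : Set C(X, ℝ)), f x ≠ f y)
    (hconst : (1 : C(X, ℝ)) ∈ ⋃ j, (F j : Set C(X, ℝ))) :
    {l : V →ₗ[ℝ] ℝ | ∀ j : ℕ, ∀ p ∈ F j, 0 ≤ ∫ u, l (φ u) * (p u) ^ 2 ∂μ} =
    {l : V →ₗ[ℝ] ℝ | ∀ c ∈ coneHull (Set.range fun x : X => φ x), 0 ≤ l c} :=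
  stmt_0_general μ hfull φ F hmono hmul hsep hconst
end

section
/- In the BVL setting, if for every point p ∈ X there is a sum of squares s of elements of F with ∫_X λ(φ(u)) s(u) dμ(u) = λ(φ(p)) for all λ ∈ V*, then C*(F) = C*. -/
open MeasureTheory

theorem stmt_2
    {X : Type*} [TopologicalSpace X] [CompactSpace X] [T2Space X]
    [MeasurableSpace X] [BorelSpace X]
    {V : Type*} [NormedAddCommGroup V] [NormedSpace ℝ V] [FiniteDimensional ℝ V]
    (μ : Measure X) [IsFiniteMeasure μ]
    (hfull : ∀ U : Set X, IsOpen U → U.Nonempty → 0 < μ U)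
    (φ : C(X, V))
    (F : Subspace ℝ C(X, ℝ))
    (hdirac : ∀ p : X, ∃ (m : ℕ) (q : Fin m → C(X, ℝ)), (∀ i, q i ∈ F) ∧
      ∀ l : V →ₗ[ℝ] ℝ,
        ∫ u, l (φ u) * (∑ i, (q i u) ^ 2) ∂μ = l (φ p)) :
    {l : V →ₗ[ℝ] ℝ | ∀ p ∈ F, 0 ≤ ∫ u, l (φ u) * (p u) ^ 2 ∂μ} =
    {l : V →ₗ[ℝ] ℝ | ∀ c ∈ coneHull (Set.range fun x : X => φ x), 0 ≤ l c} := by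
  ext l
  have hlc : Continuous l := l.continuous_of_finiteDimensional
  simp only [Set.mem_setOf_eq]
  constructor
  · intro hl c hc
    obtain ⟨m, c', x, hc', hx, rfl⟩ := hc
    rw [map_sum]
    refine Finset.sum_nonneg fun i _ => ?_
    rw [l.map_smul, smul_eq_mul]
    refine mul_nonneg (hc' i) ?_
    obtain ⟨p, hp⟩ := hx i
    rw [← hp]
    obtain ⟨n, q, hqF, hq⟩ := hdirac p
    have key := hq l
    rw [show (fun x : X => φ x) p = φ p from rfl, ← key]
    have : ∀ u : X, l (φ u) * (∑ i, (q i u) ^ 2) = ∑ i, l (φ u) * (q i u) ^ 2 := by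
      intro u; rw [Finset.mul_sum]
    rw [MeasureTheory.integral_congr_ae (Filter.Eventually.of_forall this)]
    rw [MeasureTheory.integral_finset_sum]
    · exact Finset.sum_nonneg fun i _ => hl (q i) (hqF i)
    · intro i _
      exact (Continuous.mul (hlc.comp φ.continuous)
        (((q i).continuous).pow 2)).integrable_of_hasCompactSupport (HasCompactSupport.of_compactSpace _)
  · intro hl p hp
    refine integral_nonneg fun u => ?_
    refine mul_nonneg ?_ (sq_nonneg _)
    exact hl (φ u) ⟨1, fun _ => 1, fun _ => φ u, fun _ => zero_le_one,
      fun _ => ⟨u, rfl⟩, by simp⟩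
end

section
/- In the traveling salesman setting with Aut(G) acting transitively on E(G), fix a hamiltonian cycle u₀ and let s be a sum of squares of polynomials in the edge variables of degree k restricted to X. Then s ∈ Σ(φ(u₀)) (i.e., φ(u₀) − ∫_X φ s dμ ∈ span(x̄)) if and only if there exist real numbers α, β with α − β = 1 such that ∫_X x_{ij} s dμ = α for all edges ij ∈ u₀ and ∫_X x_{ij} s dμ = β for all edges ij ∉ u₀. -/
open SimpleGraph MvPolynomial
open scoped Classical

/-- A (sub)graph is a hamiltonian cycle graph: connected and 2-regular. -/
def IsHamCycleGraph {VT : Type*} (C : SimpleGraph VT) : Prop :=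
  C.Connected ∧ ∀ v : VT, (C.neighborSet v).ncard = 2

/-! Automorphisms of `G` permute its hamiltonian cycles, so by edge-transitivity every edge lies on
the same number of them: `x̄` is a nonzero constant `η` on `E(G)` and vanishes off it, as do
`φ(u₀)` and the moment vector `e ↦ ∫ x_e s dμ`. The equation `φ(u₀) - ∫ φ s dμ = t x̄`
therefore only constrains edges of `G`, where it says that the moments equal `1 - tη` on `u₀`
and `-tη` off it. -/

open Finset

theorem exists_ite_sub_eq_const_mul_iff {α : Type*} {S T : Set α} {w x : α → ℝ} {η : ℝ}
    [DecidablePred (· ∈ T)] (hη : η ≠ 0) (hTS : T ⊆ S) (hxS : ∀ e ∈ S, x e = η)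
    (hx : ∀ e ∉ S, x e = 0) (hw : ∀ e ∉ S, w e = 0) :
    (∃ t : ℝ, (fun e => (if e ∈ T then 1 else 0) - w e) = fun e => t * x e) ↔
      ∃ a b : ℝ, a - b = 1 ∧ ∀ e ∈ S, w e = if e ∈ T then a else b := by
  constructor
  · rintro ⟨t, ht⟩
    refine ⟨1 - t * η, -(t * η), by ring, fun e he => ?_⟩
    have hte := congrFun ht e
    rw [hxS e he] at hte
    split_ifs at hte ⊢ <;> linarith
  · rintro ⟨a, b, hab, hwS⟩
    refine ⟨-b / η, funext fun e => ?_⟩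
    by_cases he : e ∈ S
    · rw [hxS e he, div_mul_cancel₀ _ hη, hwS e he]
      split_ifs <;> linarith
    · have heT : e ∉ T := fun h => he (hTS h)
      simp [hx e he, hw e he, heT]

namespace SimpleGraph

variable {V W : Type*}

theorem mem_edgeSet_comap {G : SimpleGraph W} (f : V → W) (e : Sym2 V) :
    e ∈ (G.comap f).edgeSet ↔ e.map f ∈ G.edgeSet :=
  Sym2.ind (fun _ _ => Iff.rfl) e

theorem IsHamCycleGraph.edgeSet_nonempty {C : SimpleGraph V} (hC : IsHamCycleGraph C) :
    C.edgeSet.Nonempty := by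
  obtain ⟨v⟩ := hC.1.nonempty
  obtain ⟨w, hw⟩ := Set.nonempty_of_ncard_ne_zero (s := C.neighborSet v) (by simp [hC.2 v])
  exact ⟨s(v, w), hw⟩

theorem Iso.isHamCycleGraph {G : SimpleGraph V} {G' : SimpleGraph W} (φ : G ≃g G')
    (hG : IsHamCycleGraph G) : IsHamCycleGraph G' := by
  refine ⟨φ.connected_iff.mp hG.1, fun w => ?_⟩
  rw [← φ.apply_symm_apply w, ← Nat.card_coe_set_eq,
    ← Nat.card_congr (φ.mapNeighborSet (φ.symm w)), Nat.card_coe_set_eq, hG.2]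

variable [Fintype V] [DecidableEq V]

noncomputable def hamCycles (G : SimpleGraph V) : Finset (SimpleGraph V) :=
  Finset.univ.filter fun C => IsHamCycleGraph C ∧ C ≤ G

theorem mem_hamCycles {G u : SimpleGraph V} :
    u ∈ hamCycles G ↔ IsHamCycleGraph u ∧ u ≤ G := by
  simp [hamCycles]

theorem comap_mem_hamCycles {G u : SimpleGraph V} (σ : G ≃g G) (hu : u ∈ hamCycles G) :
    u.comap σ ∈ hamCycles G := by
  rw [mem_hamCycles] at hu ⊢
  refine ⟨(Iso.comap σ.toEquiv u).symm.isHamCycleGraph hu.1, ?_⟩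
  exact fun v w h => σ.map_adj_iff.mp (hu.2 h)

theorem card_hamCycles_map_mem_edgeSet {G : SimpleGraph V} (σ : G ≃g G) (e : Sym2 V) :
    #{u ∈ hamCycles G | e.map σ ∈ u.edgeSet} = #{u ∈ hamCycles G | e ∈ u.edgeSet} := by
  refine Finset.card_nbij' (fun u => u.comap σ) (fun u => u.comap σ.symm) ?_ ?_ ?_ ?_
  · intro u hu
    simp only [coe_filter, Set.mem_ofPred_eq] at hu ⊢
    exact ⟨comap_mem_hamCycles σ hu.1, (mem_edgeSet_comap _ e).mpr hu.2⟩
  · intro u hu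
    simp only [coe_filter, Set.mem_ofPred_eq] at hu ⊢
    refine ⟨comap_mem_hamCycles σ.symm hu.1, (mem_edgeSet_comap _ _).mpr ?_⟩
    simpa [Sym2.map_map] using hu.2
  · intro u _
    ext v w
    simp
  · intro u _
    ext v w
    simp

theorem card_hamCycles_mem_edgeSet_eq {G : SimpleGraph V}
    (htrans : ∀ e ∈ G.edgeSet, ∀ f ∈ G.edgeSet, ∃ σ : G ≃g G, Sym2.map (⇑σ) e = f)
    {e f : Sym2 V} (he : e ∈ G.edgeSet) (hf : f ∈ G.edgeSet) :
    #{u ∈ hamCycles G | e ∈ u.edgeSet} = #{u ∈ hamCycles G | f ∈ u.edgeSet} := by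
  obtain ⟨σ, rfl⟩ := htrans e he f hf
  exact (card_hamCycles_map_mem_edgeSet σ e).symm

end SimpleGraph

theorem stmt_11_general {n : ℕ} (G : SimpleGraph (Fin n))
    -- Aut(G) acts transitively on the edges of G
    (htrans : ∀ e ∈ G.edgeSet, ∀ f ∈ G.edgeSet, ∃ σ : G ≃g G, Sym2.map (⇑σ) e = f)
    (u₀ : SimpleGraph (Fin n)) (hu₀ : IsHamCycleGraph u₀ ∧ u₀ ≤ G)
    (m : ℕ) (q : Fin m → MvPolynomial (Sym2 (Fin n)) ℝ) :
    -- X = hamiltonian cycles of G with uniform measure; φ = edge-indicator vector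
    let HC : Finset (SimpleGraph (Fin n)) :=
      Finset.univ.filter fun C => IsHamCycleGraph C ∧ C ≤ G
    let ind : SimpleGraph (Fin n) → Sym2 (Fin n) → ℝ := fun u e =>
      if e ∈ u.edgeSet then 1 else 0
    -- s = sum of squares of degree-k polynomials in the edge variables, restricted to X
    let s : SimpleGraph (Fin n) → ℝ := fun u => ∑ i, (eval (ind u) (q i)) ^ 2
    let xbar : Sym2 (Fin n) → ℝ := fun e => (∑ u ∈ HC, ind u e) / (HC.card : ℝ)
    -- s ∈ Σ(φ(u₀)) iff the two-values condition holds
    ((∃ t : ℝ, (fun e => ind u₀ e - (∑ u ∈ HC, s u * ind u e) / (HC.card : ℝ)) =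
        fun e => t * xbar e) ↔
      ∃ a b : ℝ, a - b = 1 ∧ ∀ e ∈ G.edgeSet,
        (∑ u ∈ HC, ind u e * s u) / (HC.card : ℝ) = if e ∈ u₀.edgeSet then a else b) := by
  intro HC ind s xbar
  have hHC : HC = hamCycles G := rfl
  have hu₀HC : u₀ ∈ HC := mem_hamCycles.mpr hu₀
  obtain ⟨e₀, he₀⟩ := hu₀.1.edgeSet_nonempty
  have he₀G : e₀ ∈ G.edgeSet := edgeSet_mono hu₀.2 he₀
  have hind_sum (e : Sym2 (Fin n)) :
      ∑ u ∈ HC, ind u e = #{u ∈ hamCycles G | e ∈ u.edgeSet} := by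
    simp only [ind, Finset.sum_boole, hHC]
  have hoff : ∀ e ∉ G.edgeSet, ∀ u ∈ HC, ind u e = 0 := fun e he u hu =>
    if_neg fun h => he (edgeSet_mono (mem_hamCycles.mp hu).2 h)
  have hη : (#{u ∈ hamCycles G | e₀ ∈ u.edgeSet} : ℝ) / #HC ≠ 0 := by
    have hN : 0 < #{u ∈ hamCycles G | e₀ ∈ u.edgeSet} :=
      card_pos.mpr ⟨u₀, mem_filter.mpr ⟨hu₀HC, he₀⟩⟩
    have hHCpos : 0 < #HC := card_pos.mpr ⟨u₀, hu₀HC⟩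
    positivity
  simp_rw [mul_comm (s _) (ind _ _)]
  refine exists_ite_sub_eq_const_mul_iff (w := fun e => (∑ u ∈ HC, ind u e * s u) / #HC)
    (x := xbar) hη (edgeSet_mono hu₀.2) (fun e he => ?_) (fun e he => ?_) (fun e he => ?_)
  · simp only [xbar, hind_sum, card_hamCycles_mem_edgeSet_eq htrans he he₀G]
  · simp only [xbar, sum_eq_zero (hoff e he), zero_div]
  · rw [sum_eq_zero fun u hu => by rw [hoff e he u hu, zero_mul], zero_div]

theorem stmt_11 {n : ℕ} (G : SimpleGraph (Fin n))
    -- Aut(G) acts transitively on the edges of G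
    (htrans : ∀ e ∈ G.edgeSet, ∀ f ∈ G.edgeSet, ∃ σ : G ≃g G, Sym2.map (⇑σ) e = f)
    (u₀ : SimpleGraph (Fin n)) (hu₀ : IsHamCycleGraph u₀ ∧ u₀ ≤ G)
    (k m : ℕ) (q : Fin m → MvPolynomial (Sym2 (Fin n)) ℝ)
    (hq : ∀ i, (q i).IsHomogeneous k) :
    -- X = hamiltonian cycles of G with uniform measure; φ = edge-indicator vector
    let HC : Finset (SimpleGraph (Fin n)) :=
      Finset.univ.filter fun C => IsHamCycleGraph C ∧ C ≤ G
    let ind : SimpleGraph (Fin n) → Sym2 (Fin n) → ℝ := fun u e =>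
      if e ∈ u.edgeSet then 1 else 0
    -- s = sum of squares of degree-k polynomials in the edge variables, restricted to X
    let s : SimpleGraph (Fin n) → ℝ := fun u => ∑ i, (eval (ind u) (q i)) ^ 2
    let xbar : Sym2 (Fin n) → ℝ := fun e => (∑ u ∈ HC, ind u e) / (HC.card : ℝ)
    -- s ∈ Σ(φ(u₀)) iff the two-values condition holds
    ((∃ t : ℝ, (fun e => ind u₀ e - (∑ u ∈ HC, s u * ind u e) / (HC.card : ℝ)) =
        fun e => t * xbar e) ↔
      ∃ a b : ℝ, a - b = 1 ∧ ∀ e ∈ G.edgeSet,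
        (∑ u ∈ HC, ind u e * s u) / (HC.card : ℝ) = if e ∈ u₀.edgeSet then a else b) :=
  stmt_11_general G htrans u₀ hu₀ m q
end

section
/- Let γ = (γ₁,…,γ_n) be a multi-index with all γ_i even and let μ be the normalized surface measure on S^{n−1} ⊆ ℝⁿ. Then ∫_{S^{n−1}} x^γ dμ = Γ(η₁)⋯Γ(η_n)·Γ(n/2) / (Γ(1/2)ⁿ · Γ(η₁+⋯+η_n)) where η_i = (γ_i+1)/2; and the integral is 0 if some γ_i is odd. -/
open MeasureTheory

/-- The unit sphere S^{n-1} ⊆ ℝⁿ. -/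
def sphereSet (n : ℕ) : Set (Fin n → ℝ) := {v | ∑ i, v i ^ 2 = 1}

/-!
Write `m(γ) = ∫ x^γ dμ`. Odd moments vanish by invariance under the reflection `x_i ↦ -x_i`.
For even moments, fix `i ≠ j` and a monomial `w` free of `x_i, x_j`. Invariance under the rotations
of the `(x_i, x_j)`-plane makes `∫ (c x_i - s x_j)^(2D) w dμ` independent of `(c, s)` on the unit
circle; expanding binomially and comparing coefficients of a polynomial gives
`C(2D, 2k) m(x_i^(2k) x_j^(2D-2k) w) = C(D, k) m(x_i^(2D) w)`, hence
`(γ_i + 1) m(γ + 2e_j) = (γ_j + 1) m(γ + 2e_i)`. Summing over `j` and using `∑ x_j² = 1` yields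
`(n + |γ|) m(γ + 2e_i) = (γ_i + 1) m(γ)`. The Gamma expression satisfies the same recursion by
`Γ(s + 1) = s Γ(s)`, and both sides equal `1` at `γ = 0`.
-/

namespace Folland

variable {n : ℕ}

lemma abs_le_one_of_mem_sphereSet {v : Fin n → ℝ} (hv : v ∈ sphereSet n) (i : Fin n) :
    |v i| ≤ 1 := by
  have : v i ^ 2 ≤ 1 :=
    hv ▸ Finset.single_le_sum (fun j _ => sq_nonneg (v j)) (Finset.mem_univ i)
  exact abs_le_one_iff_mul_self_le_one.2 (by nlinarith)

instance : CompactSpace (sphereSet n) := by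
  refine isCompact_iff_compactSpace.mp (Metric.isCompact_of_isClosed_isBounded ?_ ?_)
  · exact isClosed_eq (by fun_prop) continuous_const
  · refine (Metric.isBounded_closedBall (x := 0) (r := 1)).subset fun v hv => ?_
    simpa [pi_norm_le_iff_of_nonneg] using abs_le_one_of_mem_sphereSet hv

lemma prod_pow_add (v : Fin n → ℝ) (γ δ : Fin n → ℕ) :
    ∏ l, v l ^ (γ + δ) l = (∏ l, v l ^ γ l) * ∏ l, v l ^ δ l := by
  simp [pow_add, Finset.prod_mul_distrib]

lemma prod_pow_single (v : Fin n → ℝ) (i : Fin n) (p : ℕ) :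
    ∏ l, v l ^ Pi.single i p l = v i ^ p := by
  simp [Pi.single_apply, pow_ite]

lemma prod_pow_mul (v w : Fin n → ℝ) (γ : Fin n → ℕ) :
    ∏ l, (v * w) l ^ γ l = (∏ l, v l ^ γ l) * ∏ l, w l ^ γ l := by
  simp [mul_pow, Finset.prod_mul_distrib]

lemma prod_pow_congr {v w : Fin n → ℝ} {γ : Fin n → ℕ} (h : ∀ l, γ l ≠ 0 → v l = w l) :
    ∏ l, v l ^ γ l = ∏ l, w l ^ γ l := by
  refine Finset.prod_congr rfl fun l _ => ?_
  by_cases hl : γ l = 0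
  · simp [hl]
  · rw [h l hl]

def IsOrthogonallyInvariant (μ : Measure (sphereSet n)) : Prop :=
  ∀ (A : (Fin n → ℝ) ≃ₗ[ℝ] (Fin n → ℝ))
    (hA : ∀ v : Fin n → ℝ, ∑ i, (A v) i ^ 2 = ∑ i, v i ^ 2),
    MeasurePreserving (fun x : sphereSet n => (⟨A x.1, (hA x.1).trans x.2⟩ : sphereSet n)) μ μ

lemma IsOrthogonallyInvariant.integral_comp {μ : Measure (sphereSet n)}
    (hμ : IsOrthogonallyInvariant μ) (f : (Fin n → ℝ) →ₗ[ℝ] (Fin n → ℝ))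
    (hf : ∀ v, ∑ i, f v i ^ 2 = ∑ i, v i ^ 2) (g : (Fin n → ℝ) → ℝ) :
    ∫ x, g (f x) ∂μ = ∫ x, g x ∂μ := by
  have hinj : Function.Injective f := by
    refine (injective_iff_map_eq_zero f).2 fun v hv => funext fun i => ?_
    have hsum : ∑ l, v l ^ 2 = 0 := by simp [← hf, hv]
    exact pow_eq_zero_iff two_ne_zero |>.1 <|
      (Finset.sum_eq_zero_iff_of_nonneg fun l _ => sq_nonneg (v l)).1 hsum i (Finset.mem_univ i)
  have hA := hμ (LinearEquiv.ofInjectiveEndo f hinj) hf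
  refine hA.integral_comp (Continuous.isClosedEmbedding ?_ ?_).measurableEmbedding (g ·.1)
  · exact (f.continuous_of_finiteDimensional.comp continuous_subtype_val).subtype_mk _
  · exact fun x y hxy => Subtype.ext (hinj (congrArg Subtype.val hxy))

def planeRotation (i j : Fin n) (c s : ℝ) : (Fin n → ℝ) →ₗ[ℝ] (Fin n → ℝ) where
  toFun v := Function.update (Function.update v i (c * v i - s * v j)) j (s * v i + c * v j)
  map_add' v w := by
    ext l
    simp only [Function.update_apply, Pi.add_apply]
    split_ifs <;> ring
  map_smul' r v := by
    ext l
    simp only [Function.update_apply, Pi.smul_apply, smul_eq_mul, RingHom.id_apply]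
    split_ifs <;> ring

lemma planeRotation_apply_left {i j : Fin n} (hij : i ≠ j) (c s : ℝ) (v : Fin n → ℝ) :
    planeRotation i j c s v i = c * v i - s * v j := by
  simp [planeRotation, hij]

lemma planeRotation_apply_of_ne {i j l : Fin n} (hi : l ≠ i) (hj : l ≠ j) (c s : ℝ)
    (v : Fin n → ℝ) : planeRotation i j c s v l = v l := by
  simp [planeRotation, hi, hj]

lemma sum_sq_planeRotation {i j : Fin n} (hij : i ≠ j) {c s : ℝ} (hcs : c ^ 2 + s ^ 2 = 1)
    (v : Fin n → ℝ) : ∑ l, planeRotation i j c s v l ^ 2 = ∑ l, v l ^ 2 := by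
  have hdiff : ∑ l, (planeRotation i j c s v l ^ 2 - v l ^ 2) = 0 := by
    rw [Fintype.sum_eq_add i j hij fun l hl => by
      rw [planeRotation_apply_of_ne hl.1 hl.2, sub_self]]
    simp only [planeRotation, LinearMap.coe_mk, AddHom.coe_mk, Function.update_self,
      Function.update_of_ne hij]
    linear_combination (v i ^ 2 + v j ^ 2) * hcs
  rwa [Finset.sum_sub_distrib, sub_eq_zero] at hdiff

lemma sum_sq_mulLeft {ε : Fin n → ℝ} (hε : ∀ l, ε l ^ 2 = 1) (v : Fin n → ℝ) :
    ∑ l, LinearMap.mulLeft ℝ ε v l ^ 2 = ∑ l, v l ^ 2 := by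
  simp [mul_pow, hε]

lemma sum_range_two_mul_add_one_of_odd_eq_zero {M : Type*} [AddCommMonoid M] {f : ℕ → M}
    (hf : ∀ p, Odd p → f p = 0) (D : ℕ) :
    ∑ p ∈ Finset.range (2 * D + 1), f p = ∑ k ∈ Finset.range (D + 1), f (2 * k) := by
  induction D with
  | zero => simp
  | succ D ih =>
    rw [show 2 * (D + 1) + 1 = 2 * D + 1 + 1 + 1 by ring, Finset.sum_range_succ,
      Finset.sum_range_succ, ih, hf _ (odd_two_mul_add_one D), add_zero,
      Finset.sum_range_succ _ (D + 1)]
    rfl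

lemma coeff_eq_zero_of_sum_mul_pow_eq_zero {D : ℕ} {g : ℕ → ℝ}
    (h : ∀ y : ℝ, 0 ≤ y → ∑ k ∈ Finset.range (D + 1), g k * y ^ k = 0) {k : ℕ} (hk : k ≤ D) :
    g k = 0 := by
  set P : Polynomial ℝ := ∑ k ∈ Finset.range (D + 1), Polynomial.C (g k) * Polynomial.X ^ k
  have hP : P = 0 := by
    refine P.eq_zero_of_infinite_isRoot ((Set.Ici_infinite 0).mono fun y hy => ?_)
    simpa [P, Polynomial.eval_finsetSum] using h y hy
  simpa [P, Polynomial.finsetSum_coeff, Polynomial.coeff_C_mul_X_pow, Nat.lt_succ_iff.2 hk]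
    using congrArg (Polynomial.coeff · k) hP

lemma two_mul_add_one_mul_choose_mul_choose (K A : ℕ) :
    (2 * K + 1) * (K + A + 1).choose K * (2 * (K + A + 1)).choose (2 * (K + 1)) =
      (2 * A + 1) * (K + A + 1).choose (K + 1) * (2 * (K + A + 1)).choose (2 * K) := by
  have h1 := Nat.choose_succ_right_eq (K + A + 1) K
  have h2 := Nat.choose_succ_right_eq (2 * (K + A + 1)) (2 * K)
  have h3 := Nat.choose_succ_right_eq (2 * (K + A + 1)) (2 * K + 1)
  rw [show K + A + 1 - K = A + 1 by omega] at h1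
  rw [show 2 * (K + A + 1) - 2 * K = 2 * A + 2 by omega] at h2
  rw [show 2 * (K + A + 1) - (2 * K + 1) = 2 * A + 1 by omega] at h3
  rw [show 2 * (K + 1) = 2 * K + 1 + 1 by ring]
  apply Nat.eq_of_mul_eq_mul_right (show 0 < (2 * K + 2) * (K + 1) by positivity)
  zify at h1 h2 h3 ⊢
  linear_combination (2 * (K:ℤ) + 1) * (K + 1) * ((K + A + 1).choose K : ℤ) * h3
    + (K + 1) * ((K + A + 1).choose K : ℤ) * (2 * A + 1) * h2
    - (2 * A + 1) * ((2 * (K + A + 1)).choose (2 * K) : ℤ) * (2 * K + 2) * h1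

section Moment

variable (μ : Measure (sphereSet n))

noncomputable def sphereMoment (γ : Fin n → ℕ) : ℝ :=
  ∫ u, ∏ i, (u : Fin n → ℝ) i ^ γ i ∂μ

lemma integrable_prod_pow [IsFiniteMeasure μ] (γ : Fin n → ℕ) :
    Integrable (fun u : sphereSet n => ∏ i, (u : Fin n → ℝ) i ^ γ i) μ :=
  Continuous.integrable_of_hasCompactSupport
    (continuous_finsetProd _ fun i _ => ((continuous_apply i).comp continuous_subtype_val).pow _)
    (HasCompactSupport.of_compactSpace _)

lemma sphereMoment_zero [IsProbabilityMeasure μ] : sphereMoment μ 0 = 1 := by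
  simp [sphereMoment]

lemma sum_sphereMoment_add_single_two [IsFiniteMeasure μ] (γ : Fin n → ℕ) :
    ∑ j, sphereMoment μ (γ + Pi.single j 2) = sphereMoment μ γ := by
  simp only [sphereMoment]
  rw [← integral_finsetSum _ fun j _ => integrable_prod_pow μ _]
  refine integral_congr_ae (ae_of_all _ fun u => ?_)
  simp only [prod_pow_add, prod_pow_single, ← Finset.mul_sum]
  rw [u.2, mul_one]

variable {μ}

lemma sphereMoment_eq_zero_of_odd (hμ : IsOrthogonallyInvariant μ) {γ : Fin n → ℕ}
    {i : Fin n} (hi : Odd (γ i)) : sphereMoment μ γ = 0 := by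
  set ε : Fin n → ℝ := Function.update 1 i (-1)
  have hε : ∀ l, ε l ^ 2 = 1 := fun l => by
    by_cases hl : l = i <;> simp [ε, hl]
  have hflip (v : Fin n → ℝ) : ∏ l, (ε * v) l ^ γ l = -∏ l, v l ^ γ l := by
    rw [prod_pow_mul]
    simp [ε, Function.update_apply, ite_pow, hi.neg_one_pow]
  have h := hμ.integral_comp (LinearMap.mulLeft ℝ ε) (sum_sq_mulLeft hε)
    fun v => ∏ l, v l ^ γ l
  simp only [LinearMap.mulLeft_apply, hflip, integral_neg] at h
  rw [sphereMoment]
  linarith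

lemma sphereMoment_add_single_eq_sum_choose (hμ : IsOrthogonallyInvariant μ) [IsFiniteMeasure μ]
    {i j : Fin n} (hij : i ≠ j) {δ : Fin n → ℕ} (hδi : δ i = 0) (hδj : δ j = 0) {c s : ℝ}
    (hcs : c ^ 2 + s ^ 2 = 1) (d : ℕ) :
    ∑ p ∈ Finset.range (d + 1), d.choose p * c ^ p * (-s) ^ (d - p) *
        sphereMoment μ (δ + Pi.single i p + Pi.single j (d - p)) =
      sphereMoment μ (δ + Pi.single i d) := by
  have hrot (v : Fin n → ℝ) :
      ∏ l, planeRotation i j c s v l ^ (δ + Pi.single i d : Fin n → ℕ) l =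
      ∑ p ∈ Finset.range (d + 1), d.choose p * c ^ p * (-s) ^ (d - p) *
        ∏ l, v l ^ (δ + Pi.single i p + Pi.single j (d - p) : Fin n → ℕ) l := by
    have hfix : ∀ l, δ l ≠ 0 → planeRotation i j c s v l = v l := fun l hl =>
      planeRotation_apply_of_ne (by rintro rfl; exact hl hδi) (by rintro rfl; exact hl hδj) c s v
    rw [prod_pow_add, prod_pow_single, prod_pow_congr hfix, planeRotation_apply_left hij,
      sub_eq_add_neg, add_pow, Finset.mul_sum]
    refine Finset.sum_congr rfl fun p _ => ?_
    rw [prod_pow_add, prod_pow_add, prod_pow_single, prod_pow_single]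
    ring
  calc _ = ∫ u, ∑ p ∈ Finset.range (d + 1), d.choose p * c ^ p * (-s) ^ (d - p) *
        ∏ l, (u : Fin n → ℝ) l ^ (δ + Pi.single i p + Pi.single j (d - p) : Fin n → ℕ) l ∂μ := by
        rw [integral_finsetSum _ fun p _ => (integrable_prod_pow μ _).const_mul _]
        simp only [integral_const_mul, sphereMoment]
    _ = ∫ u, ∏ l, planeRotation i j c s u l ^ (δ + Pi.single i d : Fin n → ℕ) l ∂μ := by
        simp only [hrot]
    _ = _ := hμ.integral_comp _ (sum_sq_planeRotation hij hcs)
        fun v => ∏ l, v l ^ (δ + Pi.single i d : Fin n → ℕ) l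

lemma sum_choose_mul_pow_mul_sphereMoment (hμ : IsOrthogonallyInvariant μ) [IsFiniteMeasure μ]
    {i j : Fin n} (hij : i ≠ j) {δ : Fin n → ℕ} (hδi : δ i = 0) (hδj : δ j = 0) (D : ℕ)
    {y : ℝ} (hy : 0 ≤ y) :
    ∑ k ∈ Finset.range (D + 1), (2 * D).choose (2 * k) * y ^ k *
        sphereMoment μ (δ + Pi.single i (2 * k) + Pi.single j (2 * D - 2 * k)) =
      (1 + y) ^ D * sphereMoment μ (δ + Pi.single i (2 * D)) := by
  have hy1 : 0 < 1 + y := by linarith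
  -- With `c² = y/(1+y)` and `s² = 1/(1+y)` the rotation identity becomes polynomial in `y`.
  set c := √(y / (1 + y))
  set s := √(1 / (1 + y))
  have hc : c ^ 2 = y / (1 + y) := Real.sq_sqrt (by positivity)
  have hs : s ^ 2 = 1 / (1 + y) := Real.sq_sqrt (by positivity)
  have hcs : c ^ 2 + s ^ 2 = 1 := by rw [hc, hs, ← add_div, add_comm, div_self hy1.ne']
  have hodd : ∀ p, Odd p → (2 * D).choose p * c ^ p * (-s) ^ (2 * D - p) *
      sphereMoment μ (δ + Pi.single i p + Pi.single j (2 * D - p)) = 0 := fun p hp => by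
    rw [sphereMoment_eq_zero_of_odd hμ (i := i) (by simpa [hδi, hij.symm] using hp), mul_zero]
  rw [← sphereMoment_add_single_eq_sum_choose hμ hij hδi hδj hcs,
    sum_range_two_mul_add_one_of_odd_eq_zero hodd, Finset.mul_sum]
  refine Finset.sum_congr rfl fun k hk => ?_
  have hkD : k + (D - k) = D := by have := Finset.mem_range.1 hk; omega
  have hpow : (1 + y) ^ D = (1 + y) ^ k * (1 + y) ^ (D - k) := by rw [← pow_add, hkD]
  rw [show 2 * D - 2 * k = 2 * (D - k) by omega, pow_mul, pow_mul, neg_sq, hc, hs, hpow,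
    div_pow, div_pow, one_pow]
  field_simp

lemma choose_mul_sphereMoment (hμ : IsOrthogonallyInvariant μ) [IsFiniteMeasure μ]
    {i j : Fin n} (hij : i ≠ j) {δ : Fin n → ℕ} (hδi : δ i = 0) (hδj : δ j = 0) {D k : ℕ}
    (hk : k ≤ D) :
    (2 * D).choose (2 * k) *
        sphereMoment μ (δ + Pi.single i (2 * k) + Pi.single j (2 * D - 2 * k)) =
      D.choose k * sphereMoment μ (δ + Pi.single i (2 * D)) := by
  set m : ℕ → ℝ := fun r => sphereMoment μ (δ + Pi.single i (2 * r) + Pi.single j (2 * D - 2 * r))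
  set M := sphereMoment μ (δ + Pi.single i (2 * D))
  have key : ∀ y : ℝ, 0 ≤ y →
      ∑ r ∈ Finset.range (D + 1), ((2 * D).choose (2 * r) * m r - D.choose r * M) * y ^ r = 0 := by
    intro y hy
    have hbinom := add_pow y 1 D
    simp only [one_pow, mul_one] at hbinom
    simp only [sub_mul, Finset.sum_sub_distrib, sub_eq_zero]
    calc _ = ∑ r ∈ Finset.range (D + 1), (2 * D).choose (2 * r) * y ^ r * m r :=
          Finset.sum_congr rfl fun r _ => by ring
      _ = (1 + y) ^ D * M := sum_choose_mul_pow_mul_sphereMoment hμ hij hδi hδj D hy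
      _ = _ := by
          rw [add_comm, hbinom, Finset.sum_mul]
          exact Finset.sum_congr rfl fun r _ => by ring
  exact sub_eq_zero.1 (coeff_eq_zero_of_sum_mul_pow_eq_zero key hk)

lemma sphereMoment_add_single_two_comm (hμ : IsOrthogonallyInvariant μ) [IsFiniteMeasure μ]
    {γ : Fin n → ℕ} (hγ : ∀ l, Even (γ l)) {i j : Fin n} (hij : i ≠ j) :
    (γ i + 1) * sphereMoment μ (γ + Pi.single j 2) =
      (γ j + 1) * sphereMoment μ (γ + Pi.single i 2) := by
  obtain ⟨K, hK⟩ := hγ i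
  obtain ⟨A, hA⟩ := hγ j
  set δ := Function.update (Function.update γ i 0) j 0
  have hδi : δ i = 0 := by simp [δ, hij]
  have hδj : δ j = 0 := by simp [δ]
  have hj : γ + Pi.single j 2 =
      δ + Pi.single i (2 * K) + Pi.single j (2 * (K + A + 1) - 2 * K) := by
    ext l
    simp only [δ, Pi.add_apply, Pi.single_apply, Function.update_apply]
    split_ifs <;> subst_vars <;> omega
  have hi : γ + Pi.single i 2 =
      δ + Pi.single i (2 * (K + 1)) + Pi.single j (2 * (K + A + 1) - 2 * (K + 1)) := by
    ext l
    simp only [δ, Pi.add_apply, Pi.single_apply, Function.update_apply]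
    split_ifs <;> subst_vars <;> omega
  have h1 := choose_mul_sphereMoment hμ hij hδi hδj (D := K + A + 1) (k := K) (by omega)
  have h2 := choose_mul_sphereMoment hμ hij hδi hδj (D := K + A + 1) (k := K + 1) (by omega)
  rw [← hj] at h1
  rw [← hi] at h2
  have hchoose : ((2 * K + 1 : ℕ) : ℝ) * (K + A + 1).choose K *
        (2 * (K + A + 1)).choose (2 * (K + 1)) =
      ((2 * A + 1 : ℕ) : ℝ) * (K + A + 1).choose (K + 1) * (2 * (K + A + 1)).choose (2 * K) := by
    exact_mod_cast two_mul_add_one_mul_choose_mul_choose K A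
  have hpos :
      (0 : ℝ) < (2 * (K + A + 1)).choose (2 * K) * (2 * (K + A + 1)).choose (2 * (K + 1)) := by
    have := Nat.choose_pos (n := 2 * (K + A + 1)) (k := 2 * K) (by omega)
    have := Nat.choose_pos (n := 2 * (K + A + 1)) (k := 2 * (K + 1)) (by omega)
    positivity
  refine mul_left_cancel₀ hpos.ne' ?_
  rw [hK, hA]
  push_cast at hchoose ⊢
  linear_combination (2 * (K : ℝ) + 1) * ((2 * (K + A + 1)).choose (2 * (K + 1)) : ℝ) * h1
    - (2 * (A : ℝ) + 1) * ((2 * (K + A + 1)).choose (2 * K) : ℝ) * h2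
    + sphereMoment μ (δ + Pi.single i (2 * (K + A + 1))) * hchoose

lemma sphereMoment_add_single_two (hμ : IsOrthogonallyInvariant μ) [IsFiniteMeasure μ]
    {γ : Fin n → ℕ} (hγ : ∀ l, Even (γ l)) (i : Fin n) :
    (n + ∑ l, (γ l : ℝ)) * sphereMoment μ (γ + Pi.single i 2) =
      (γ i + 1) * sphereMoment μ γ := by
  calc _ = ∑ j, ((γ j : ℝ) + 1) * sphereMoment μ (γ + Pi.single i 2) := by
        rw [← Finset.sum_mul, Finset.sum_add_distrib]
        simp [add_comm]
    _ = ∑ j, ((γ i : ℝ) + 1) * sphereMoment μ (γ + Pi.single j 2) := by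
        refine Finset.sum_congr rfl fun j _ => ?_
        rcases eq_or_ne j i with rfl | hji
        · rfl
        · exact (sphereMoment_add_single_two_comm hμ hγ hji.symm).symm
    _ = _ := by rw [← Finset.mul_sum, sum_sphereMoment_add_single_two]

end Moment

noncomputable def follandFormula (γ : Fin n → ℕ) : ℝ :=
  (∏ i, Real.Gamma (((γ i : ℝ) + 1) / 2)) * Real.Gamma ((n : ℝ) / 2) /
    (Real.Gamma (1 / 2) ^ n * Real.Gamma (∑ i, ((γ i : ℝ) + 1) / 2))

lemma sum_add_one_div_two (γ : Fin n → ℕ) :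
    ∑ i, ((γ i : ℝ) + 1) / 2 = (n + ∑ i, (γ i : ℝ)) / 2 := by
  simp [← Finset.sum_div, Finset.sum_add_distrib, add_comm]

lemma follandFormula_zero (hn : 0 < n) : follandFormula (0 : Fin n → ℕ) = 1 := by
  have h1 : Real.Gamma (1 / 2) ≠ 0 := (Real.Gamma_pos_of_pos one_half_pos).ne'
  have h2 : Real.Gamma ((n : ℝ) / 2) ≠ 0 := (Real.Gamma_pos_of_pos (by positivity)).ne'
  rw [follandFormula, sum_add_one_div_two]
  simp only [Pi.zero_apply, Nat.cast_zero, zero_add, Finset.sum_const_zero, add_zero,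
    Finset.prod_const, Finset.card_univ, Fintype.card_fin]
  exact div_self (mul_ne_zero (pow_ne_zero _ h1) h2)

lemma follandFormula_add_single_two (γ : Fin n → ℕ) (i : Fin n) :
    (n + ∑ l, (γ l : ℝ)) * follandFormula (γ + Pi.single i 2) =
      (γ i + 1) * follandFormula γ := by
  have hpos : 0 < (n + ∑ l, (γ l : ℝ)) := by
    have : (0 : ℝ) < n := by exact_mod_cast i.pos
    positivity
  have hS : 0 < (n + ∑ l, (γ l : ℝ)) / 2 := half_pos hpos
  have hprod : ∏ l, Real.Gamma ((((γ + Pi.single i 2 : Fin n → ℕ) l : ℝ) + 1) / 2) =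
      ((γ i + 1) / 2) * ∏ l, Real.Gamma (((γ l : ℝ) + 1) / 2) := by
    have hterm (l : Fin n) : Real.Gamma ((((γ + Pi.single i 2 : Fin n → ℕ) l : ℝ) + 1) / 2) =
        (if l = i then ((γ i : ℝ) + 1) / 2 else 1) * Real.Gamma (((γ l : ℝ) + 1) / 2) := by
      rcases eq_or_ne l i with rfl | hl
      · rw [if_pos rfl, ← Real.Gamma_add_one (by positivity)]
        congr 1
        simp only [Pi.add_apply, Pi.single_eq_same]
        push_cast
        ring
      · simp [hl]
    rw [Finset.prod_congr rfl fun l _ => hterm l, Finset.prod_mul_distrib, Finset.prod_ite_eq',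
      if_pos (Finset.mem_univ i)]
  have hsum : ∑ l, (((γ + Pi.single i 2 : Fin n → ℕ) l : ℝ) + 1) / 2 =
      (n + ∑ l, (γ l : ℝ)) / 2 + 1 := by
    have hterm (l : Fin n) : (((γ + Pi.single i 2 : Fin n → ℕ) l : ℝ) + 1) / 2 =
        ((γ l : ℝ) + 1) / 2 + if l = i then 1 else 0 := by
      rcases eq_or_ne l i with rfl | hl
      · simp only [Pi.add_apply, Pi.single_eq_same]
        push_cast
        ring
      · simp [hl]
    rw [Finset.sum_congr rfl fun l _ => hterm l, Finset.sum_add_distrib, Finset.sum_ite_eq',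
      if_pos (Finset.mem_univ i), sum_add_one_div_two]
  rw [follandFormula, follandFormula, hprod, hsum, sum_add_one_div_two,
    Real.Gamma_add_one hS.ne']
  field_simp [hpos.ne']

lemma induction_add_single {ι : Type*} [Finite ι] [DecidableEq ι] {P : (ι → ℕ) → Prop}
    (zero : P 0) (add_single : ∀ β i, P β → P (β + Pi.single i 1)) (β : ι → ℕ) : P β := by
  suffices ∀ α, P α → P (α + β) by simpa using this 0 zero
  induction β using Pi.single_induction with
  | zero => simp
  | add f g hf hg => exact fun α hα => add_assoc α f g ▸ hg _ (hf α hα)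
  | single i m =>
    induction m with
    | zero => simp
    | succ m ih =>
      intro α hα
      rw [Pi.single_add (f := fun _ => ℕ) i m 1, ← add_assoc]
      exact add_single _ i (ih α hα)

lemma sphereMoment_eq_follandFormula (hn : 0 < n) {μ : Measure (sphereSet n)}
    [IsProbabilityMeasure μ] (hμ : IsOrthogonallyInvariant μ) {γ : Fin n → ℕ}
    (hγ : ∀ i, Even (γ i)) :
    sphereMoment μ γ = follandFormula γ := by
  choose β hβ using hγ
  obtain rfl : γ = β + β := funext hβ
  clear hβ
  induction β using induction_add_single with
  | zero => rw [add_zero, sphereMoment_zero, follandFormula_zero hn]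
  | add_single β i ih =>
    have hsucc : β + Pi.single i 1 + (β + Pi.single i 1) = β + β + Pi.single i 2 := by
      rw [add_add_add_comm, ← Pi.single_add]
    have hpos : 0 < (n + ∑ l, ((β + β) l : ℝ)) := by positivity
    rw [hsucc]
    refine mul_left_cancel₀ hpos.ne' ?_
    rw [sphereMoment_add_single_two hμ (γ := β + β) (fun l => ⟨β l, rfl⟩),
      follandFormula_add_single_two, ih]

end Folland

theorem stmt_16 {n : ℕ} (hn : 0 < n)
    (μ : Measure ↥(sphereSet n)) [IsProbabilityMeasure μ]
    -- μ is the normalized surface measure: a probability measure invariant under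
    -- every linear isometry of ℝⁿ
    (hinv : ∀ (A : (Fin n → ℝ) ≃ₗ[ℝ] (Fin n → ℝ))
      (hA : ∀ v : Fin n → ℝ, ∑ i, (A v) i ^ 2 = ∑ i, v i ^ 2),
      MeasurePreserving
        (fun x : ↥(sphereSet n) =>
          (⟨A x.1, by
            show ∑ i, (A x.1) i ^ 2 = 1
            rw [hA]; exact x.2⟩ : ↥(sphereSet n))) μ μ)
    (γ : Fin n → ℕ) :
    -- Folland's formula
    ((∀ i, Even (γ i)) →
      ∫ u, (∏ i, (u : Fin n → ℝ) i ^ γ i) ∂μ =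
        (∏ i, Real.Gamma (((γ i : ℝ) + 1) / 2)) * Real.Gamma ((n : ℝ) / 2) /
          (Real.Gamma (1 / 2) ^ n * Real.Gamma (∑ i, ((γ i : ℝ) + 1) / 2))) ∧
    ((∃ i, Odd (γ i)) → ∫ u, (∏ i, (u : Fin n → ℝ) i ^ γ i) ∂μ = 0) :=
  ⟨fun hγ => Folland.sphereMoment_eq_follandFormula hn hinv hγ,
    fun ⟨_, hi⟩ => Folland.sphereMoment_eq_zero_of_odd hinv hi⟩
end
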